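/- There exists α ∈ (0,π) such that (1/2)(1 + cos²(α/2)) = ((1/√2)cos²(α/2) + sin²(α/2))², and for this α the common value is strictly less than 3/4. -/
import Mathlib


/-- Alice's cheating-probability bound `f(α) = (1/2)(1 + cos²(α/2))`. -/
noncomputable def aliceBound (α : ℝ) : ℝ := (1 / 2) * (1 + Real.cos (α / 2) ^ 2)

/-- Bob's cheating-probability bound `g(α) = ((1/√2)cos²(α/2) + sin²(α/2))²`. -/
noncomputable def bobBound (α : ℝ) : ℝ :=
  ((Real.sqrt 2)⁻¹ * Real.cos (α / 2) ^ 2 + Real.sin (α / 2) ^ 2) ^ 2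

/-- there is `α ∈ (0,π)` where the two cheating bounds agree,
and the common value is strictly less than `3/4`. -/
theorem exists_balanced_parameter :
    ∃ α ∈ Set.Ioo (0 : ℝ) Real.pi,
      aliceBound α = bobBound α ∧ aliceBound α < 3 / 4 := by
  have pi_pos := Real.pi_pos
  set h : ℝ → ℝ := fun α => aliceBound α - bobBound α with hh
  have hcont : ContinuousOn h (Set.Icc (Real.pi / 2) Real.pi) := by
    apply Continuous.continuousOn
    unfold h
    unfold aliceBound bobBound
    continuity
  have s2 : Real.sqrt 2 ^ 2 = 2 := Real.sq_sqrt (by norm_num)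
  have s2pos : (1:ℝ) < Real.sqrt 2 := by
    nlinarith [Real.sqrt_nonneg 2]
  have hb : h Real.pi < 0 := by
    unfold h
    unfold aliceBound bobBound
    beta_reduce
    rw [Real.cos_pi_div_two, Real.sin_pi_div_two]
    norm_num
  have ha : 0 < h (Real.pi / 2) := by
    unfold h
    unfold aliceBound bobBound
    beta_reduce
    have : Real.pi / 2 / 2 = Real.pi / 4 := by ring
    rw [this, Real.cos_pi_div_four, Real.sin_pi_div_four]
    have h4 : ((Real.sqrt 2 / 2) ^ 2 : ℝ) = 1 / 2 := by
      rw [div_pow, s2]; norm_num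
    rw [h4]
    rw [inv_eq_one_div, div_mul_eq_mul_div, one_mul]
    have hinv : (1 : ℝ) / Real.sqrt 2 = Real.sqrt 2 / 2 := by
      rw [div_eq_div_iff (by positivity) (by norm_num)]
      nlinarith
    nlinarith
  have key := intermediate_value_Ioo' (le_of_lt (by linarith : Real.pi / 2 < Real.pi)) hcont
  have h0 : (0:ℝ) ∈ Set.Ioo (h Real.pi) (h (Real.pi / 2)) := ⟨hb, ha⟩
  obtain ⟨α, hαmem, hα0⟩ := key h0
  obtain ⟨hα1, hα2⟩ := hαmem
  refine ⟨α, ⟨by linarith, hα2⟩, by simp only [hh] at hα0; beta_reduce at hα0; linarith, ?_⟩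
  -- aliceBound α < 3/4 since cos(α/2)² < 1/2
  have hc1 : Real.cos (α / 2) < Real.cos (Real.pi / 4) := by
    apply Real.cos_lt_cos_of_nonneg_of_le_pi
    · positivity
    · linarith
    · linarith
  have hc2 : 0 < Real.cos (α / 2) := by
    apply Real.cos_pos_of_mem_Ioo
    constructor <;> [linarith; linarith]
  rw [Real.cos_pi_div_four] at hc1
  unfold aliceBound
  nlinarith
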